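/- If a random joint choice rule p is consistent with CDRUM, then its Möbius inverse is nonnegative: q(x,y,A,B) ≥ 0 for all A, B ⊆ X and (x,y) ∈ A × B (complete monotonicity). -/

import Mathlib

open Finset

/-- Preferences (linear orders) on `X`, encoded as rank functions: `x ≻ y` iff `σ x < σ y`. -/
abbrev Pref (X : Type*) [Fintype X] : Type _ := X ≃ Fin (Fintype.card X)

/-- `N(x,A)`: the set of linear orders maximized by `x` on `A`. -/
def Npref {X : Type*} [Fintype X] [DecidableEq X] (x : X) (A : Finset X) :
    Finset (Pref X) :=
  Finset.univ.filter (fun σ => ∀ a ∈ A, a ≠ x → σ x < σ a)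

/-- `I(x,A)`: the set of linear orders ranking `X \ A` above `x` and `x` above `A \ {x}`. -/
def Ipref {X : Type*} [Fintype X] [DecidableEq X] (x : X) (A : Finset X) :
    Finset (Pref X) :=
  Finset.univ.filter (fun σ => (∀ z, z ∉ A → σ z < σ x) ∧ ∀ a ∈ A, a ≠ x → σ x < σ a)

/-- The Möbius inverse of `p` in the two menu coordinates. -/
noncomputable def mob2 {X : Type*} [Fintype X] [DecidableEq X]
    (p : X → X → Finset X → Finset X → ℝ) (x y : X) (A B : Finset X) : ℝ :=
  ∑ A' ∈ Finset.univ.filter (fun A' => A ⊆ A'),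
    ∑ B' ∈ Finset.univ.filter (fun B' => B ⊆ B'),
      (-1 : ℝ) ^ ((A' \ A).card + (B' \ B).card) * p x y A' B'

/-- `ν` is a probability distribution over preferences. -/
def IsDist {X : Type*} [Fintype X] [DecidableEq X] (ν : Pref X → ℝ) : Prop :=
  (∀ σ, 0 ≤ ν σ) ∧ ∑ σ, ν σ = 1

/-- `t` is a transition function: for each choice and preference, a distribution over
next-period preferences; `t x σ σ'` is the weight on `σ'` given input `(x, σ)`. -/
def IsTransition {X : Type*} [Fintype X] [DecidableEq X]
    (t : X → Pref X → Pref X → ℝ) : Prop :=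
  (∀ x σ σ', 0 ≤ t x σ σ') ∧ ∀ x σ, ∑ σ', t x σ σ' = 1

/-- `(ν, t)` is a consumption dependent random utility representation of `p`. -/
def IsCDRUMRep {X : Type*} [Fintype X] [DecidableEq X]
    (p : X → X → Finset X → Finset X → ℝ) (ν : Pref X → ℝ)
    (t : X → Pref X → Pref X → ℝ) : Prop :=
  ∀ (A B : Finset X), ∀ x ∈ A, ∀ y ∈ B,
    p x y A B = ∑ σ ∈ Npref x A, ∑ σ' ∈ Npref y B, ν σ * t x σ σ'

/-!
Under the representation, `p x y A' B'` is the total weight `ν σ * t x σ σ'` of the pairs of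
preferences for which `A'` lies in the lower contour set of `x` under `σ` and `B'` in that of `y`
under `σ'`. Möbius inversion over the supersets of `A` and `B` then isolates the pairs whose lower
contour sets are exactly `A` and `B`, i.e. `σ ∈ I(x,A)` and `σ' ∈ I(y,B)`, so `q` is a sum of
nonnegative weights.
-/

theorem Finset.sum_Icc_neg_one_pow_card_sdiff {α R : Type*} [DecidableEq α] [Ring R]
    (A S : Finset α) :
    ∑ A' ∈ Icc A S, (-1 : R) ^ #(A' \ A) = if A = S then 1 else 0 := by
  by_cases hAS : A ⊆ S
  · have hcancel : ∀ T ∈ (S \ A).powerset, (A ∪ T) \ A = T := fun T hT =>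
      union_sdiff_cancel_left (disjoint_sdiff.mono_right (mem_powerset.1 hT))
    have hinj : Set.InjOn (A ∪ ·) ((S \ A).powerset : Set (Finset α)) := fun T hT U hU hTU => by
      rw [← hcancel T hT, ← hcancel U hU]
      exact congrArg (· \ A) hTU
    have hsum : ∑ T ∈ (S \ A).powerset, (-1 : R) ^ #T = if S \ A = ∅ then 1 else 0 :=
      mod_cast congrArg (Int.cast : ℤ → R) sum_powerset_neg_one_pow_card
    rw [Icc_eq_image_powerset hAS, sum_image hinj, sum_congr rfl fun T hT => by rw [hcancel T hT],
      hsum]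
    exact if_congr (sdiff_eq_empty_iff_subset.trans ⟨hAS.antisymm, (·.ge)⟩) rfl rfl
  · rw [Icc_eq_empty fun h => hAS h, sum_empty, if_neg fun h => hAS h.le]

section
variable {α β ι κ R : Type*} [Fintype α] [DecidableEq α] [Fintype β] [DecidableEq β]
  [Fintype ι] [Fintype κ] [CommRing R]

theorem sum_superset_neg_one_pow_mul_sum_subset (L : ι → Finset α) (g : ι → R) (A : Finset α) :
    ∑ A' with A ⊆ A', (-1 : R) ^ #(A' \ A) * ∑ i with A' ⊆ L i, g i = ∑ i with L i = A, g i := by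
  have hIcc (i : ι) : ({A' | A ⊆ A'} : Finset (Finset α)).filter (· ⊆ L i) = Icc A (L i) := by
    ext A'; simp
  have hfiber (i : ι) : ∑ A' with A ⊆ A', (-1 : R) ^ #(A' \ A) * (if A' ⊆ L i then g i else 0)
      = if L i = A then g i else 0 := by
    simp only [mul_ite, mul_zero, ← sum_filter, ← sum_mul, hIcc, sum_Icc_neg_one_pow_card_sdiff,
      ite_mul, one_mul, zero_mul, eq_comm (a := A)]
  simp only [sum_filter (fun i => _ ⊆ L i), mul_sum]
  rw [sum_comm, sum_filter]
  exact sum_congr rfl fun i _ => hfiber i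

theorem sum_superset_neg_one_pow_mul_sum_subset₂ (L : ι → Finset α) (M : κ → Finset β)
    (w : ι → κ → R) (A : Finset α) (B : Finset β) :
    ∑ A' with A ⊆ A', ∑ B' with B ⊆ B', (-1 : R) ^ (#(A' \ A) + #(B' \ B)) *
        ∑ i with A' ⊆ L i, ∑ j with B' ⊆ M j, w i j
      = ∑ i with L i = A, ∑ j with M j = B, w i j := by
  calc _ = ∑ A' with A ⊆ A', (-1 : R) ^ #(A' \ A) *
          ∑ i with A' ⊆ L i, ∑ B' with B ⊆ B', (-1 : R) ^ #(B' \ B) * ∑ j with B' ⊆ M j, w i j := by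
        refine sum_congr rfl fun A' _ => ?_
        simp only [pow_add, mul_assoc, mul_sum]
        rw [sum_comm]
    _ = ∑ A' with A ⊆ A', (-1 : R) ^ #(A' \ A) * ∑ i with A' ⊆ L i, ∑ j with M j = B, w i j := by
        simp only [sum_superset_neg_one_pow_mul_sum_subset M]
    _ = _ := sum_superset_neg_one_pow_mul_sum_subset L _ A

end

def lowerContour {X : Type*} [Fintype X] (σ : Pref X) (x : X) : Finset X := {a | σ x ≤ σ a}

section
variable {X : Type*} [Fintype X] [DecidableEq X]

theorem mem_Npref_iff {x : X} {A : Finset X} {σ : Pref X} :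
    σ ∈ Npref x A ↔ A ⊆ lowerContour σ x := by
  simp only [Npref, lowerContour, mem_filter, mem_univ, true_and, subset_iff]
  refine forall₂_congr fun a _ => ?_
  rcases eq_or_ne a x with rfl | hax
  · simp
  · rw [lt_iff_le_and_ne, σ.injective.ne_iff.trans ne_comm]
    simp [hax]

theorem mem_Ipref_iff {x : X} {A : Finset X} {σ : Pref X} :
    σ ∈ Ipref x A ↔ lowerContour σ x = A := by
  have hlower : (∀ z, z ∉ A → σ z < σ x) ↔ lowerContour σ x ⊆ A := by
    simp only [lowerContour, subset_iff, mem_filter, mem_univ, true_and]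
    exact forall_congr' fun z => not_imp_comm.trans (by rw [not_lt])
  rw [Subset.antisymm_iff, ← hlower, ← mem_Npref_iff]
  simp [Ipref, Npref]

theorem Npref_eq_filter (x : X) (A : Finset X) :
    Npref x A = ({σ | A ⊆ lowerContour σ x} : Finset (Pref X)) := by
  ext σ; simp [mem_Npref_iff]

theorem Ipref_eq_filter (x : X) (A : Finset X) :
    Ipref x A = ({σ | lowerContour σ x = A} : Finset (Pref X)) := by
  ext σ; simp [mem_Ipref_iff]
end

theorem mob2_eq_sum_Ipref {X : Type*} [Fintype X] [DecidableEq X]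
    {p : X → X → Finset X → Finset X → ℝ} {ν : Pref X → ℝ} {t : X → Pref X → Pref X → ℝ}
    (hrep : IsCDRUMRep p ν t) {x y : X} {A B : Finset X} (hx : x ∈ A) (hy : y ∈ B) :
    mob2 p x y A B = ∑ σ ∈ Ipref x A, ∑ σ' ∈ Ipref y B, ν σ * t x σ σ' := by
  rw [mob2, Ipref_eq_filter, Ipref_eq_filter, ← sum_superset_neg_one_pow_mul_sum_subset₂]
  refine sum_congr rfl fun A' hA' => sum_congr rfl fun B' hB' => ?_
  rw [mem_filter] at hA' hB'
  rw [hrep A' B' x (hA'.2 hx) y (hB'.2 hy), Npref_eq_filter, Npref_eq_filter]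

/-- CDRUM consistency implies complete monotonicity: the Möbius inverse of `p` is
nonnegative. -/
theorem stmt7 {X : Type*} [Fintype X] [DecidableEq X]
    (p : X → X → Finset X → Finset X → ℝ)
    (h : ∃ ν : Pref X → ℝ, ∃ t : X → Pref X → Pref X → ℝ,
      IsDist ν ∧ IsTransition t ∧ IsCDRUMRep p ν t) :
    ∀ (A B : Finset X), ∀ x ∈ A, ∀ y ∈ B, 0 ≤ mob2 p x y A B := by
  obtain ⟨ν, t, ⟨hν, -⟩, ⟨ht, -⟩, hrep⟩ := h
  intro A B x hx y hy
  rw [mob2_eq_sum_Ipref hrep hx hy]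
  exact sum_nonneg fun σ _ => sum_nonneg fun σ' _ => mul_nonneg (hν σ) (ht x σ σ')
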